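/- Let r and g be positive integers and let z, w, λ : Fin g → ℂ satisfy w i = λ i * z i for all i. Suppose M is the least positive integer m such that r·m is even and either (z i)^m = −1 for all i or (z i)^m = 1 for all i, and that moreover (z i)^M = −1 for all i. Suppose N is the least positive integer m such that r·m is even and either (w i)^m = −1 for all i or (w i)^m = 1 for all i, and that moreover (w i)^N = 1 for all i. (Each λ i then has finite multiplicative order.) Let t = lcm over i of orderOf (λ i), and set e_M = padicValNat 2 M and e_N = padicValNat 2 N. Then: if e_N ≤ e_M then padicValNat 2 t = 1 + e_M, and if e_N > e_M then padicValNat 2 t = e_N. -/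

import Mathlib

/-!
Write `ν x = v₂ (orderOf x)`. On commuting elements of finite order `ν` behaves like a
non-archimedean valuation: `ν (x * y) ≤ max (ν x) (ν y)`, with equality when `ν x ≠ ν y`.
Since `z i ^ M = -1`, every `z i` has `ν (z i) = v₂ M + 1`, while `ν (w i) ≤ v₂ N`.

If `v₂ N ≤ v₂ M`, then `ν (w i) < ν (z i)`, so `ν (l i) = ν (z i) = v₂ M + 1` for all `i`.
If `v₂ N > v₂ M`, then `ν (l i) ≤ max (ν (z i)) (ν (w i)) ≤ v₂ N`. Were `ν (l i) < v₂ N` for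
all `i`, then, with `N = 2 m`, `w i ^ m` would be `1` for all `i` (if `v₂ M + 1 < v₂ N`) or
`-1` for all `i` (if `v₂ M + 1 = v₂ N`, as then `ν (w i) = ν (z i)`); and `r * m` is even
(if `m` is odd then `M` is odd, so `r` is even), contradicting the minimality of `N`.
-/

section Valuation

variable {p : ℕ} [Fact p.Prime]

lemma padicValNat_le_of_dvd {a b : ℕ} (hb : b ≠ 0) (h : a ∣ b) :
    padicValNat p a ≤ padicValNat p b := by
  rw [← padicValNat_dvd_iff_le hb]
  exact pow_padicValNat_dvd.trans h

lemma padicValNat_lcm {a b : ℕ} (ha : a ≠ 0) (hb : b ≠ 0) :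
    padicValNat p (a.lcm b) = max (padicValNat p a) (padicValNat p b) := by
  simp only [← Nat.factorization_def _ Fact.out, Nat.factorization_lcm ha hb, Finsupp.sup_apply]

lemma padicValNat_finset_lcm {ι : Type*} {s : Finset ι} {f : ι → ℕ} (hf : ∀ i ∈ s, f i ≠ 0) :
    padicValNat p (s.lcm f) = s.sup fun i => padicValNat p (f i) := by
  classical
  induction s using Finset.induction_on with
  | empty => simp
  | insert a s ha ih =>
    have hs : s.lcm f ≠ 0 := Finset.lcm_ne_zero_iff.2 fun i hi => hf i (by simp [hi])
    rw [Finset.lcm_insert, lcm_eq_nat_lcm, padicValNat_lcm (hf a (by simp)) hs, Finset.sup_insert,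
      ih fun i hi => hf i (by simp [hi])]

lemma dvd_iff_padicValNat_le_of_dvd_mul {d m : ℕ} (hm : m ≠ 0) (hd : d ∣ p * m) :
    d ∣ m ↔ padicValNat p d ≤ padicValNat p m := by
  have hp : p.Prime := Fact.out
  refine ⟨padicValNat_le_of_dvd hm, fun h => ?_⟩
  have hpm : p * m ≠ 0 := mul_ne_zero hp.ne_zero hm
  have hd0 : d ≠ 0 := ne_zero_of_dvd_ne_zero hpm hd
  rw [← Nat.factorization_le_iff_dvd hd0 hm]
  intro q
  rcases eq_or_ne q p with rfl | hq
  · simpa only [Nat.factorization_def _ hp] using h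
  · simpa [Nat.factorization_mul hp.ne_zero hm, hp.factorization, hq.symm] using
      (Nat.factorization_le_iff_dvd hd0 hpm).2 hd q

lemma padicValNat_eq_succ_of_dvd_mul_of_not_dvd {d m : ℕ} (hm : m ≠ 0) (hd : d ∣ p * m)
    (hdm : ¬d ∣ m) : padicValNat p d = padicValNat p m + 1 := by
  have hp : p.Prime := Fact.out
  have hle := padicValNat_le_of_dvd (p := p) (mul_ne_zero hp.ne_zero hm) hd
  rw [padicValNat.mul hp.ne_zero hm, padicValNat_self, add_comm] at hle
  rw [dvd_iff_padicValNat_le_of_dvd_mul hm hd] at hdm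
  omega

end Valuation

section CommMonoid

variable {G : Type*} [CommMonoid G] {p : ℕ} [Fact p.Prime] {x y : G}

lemma padicValNat_orderOf_mul_le (hx : IsOfFinOrder x) (hy : IsOfFinOrder y) :
    padicValNat p (orderOf (x * y)) ≤
      max (padicValNat p (orderOf x)) (padicValNat p (orderOf y)) := by
  rw [← padicValNat_lcm hx.orderOf_pos.ne' hy.orderOf_pos.ne']
  exact padicValNat_le_of_dvd (Nat.lcm_ne_zero hx.orderOf_pos.ne' hy.orderOf_pos.ne')
    (Commute.all x y).orderOf_mul_dvd_lcm

lemma padicValNat_orderOf_right_le (hx : IsOfFinOrder x) (hxy : IsOfFinOrder (x * y)) :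
    padicValNat p (orderOf y) ≤
      max (padicValNat p (orderOf x)) (padicValNat p (orderOf (x * y))) := by
  rw [← padicValNat_lcm hx.orderOf_pos.ne' hxy.orderOf_pos.ne']
  exact padicValNat_le_of_dvd (Nat.lcm_ne_zero hx.orderOf_pos.ne' hxy.orderOf_pos.ne')
    (Commute.all x y).orderOf_dvd_lcm_mul

lemma padicValNat_orderOf_mul_of_lt (hx : IsOfFinOrder x) (hy : IsOfFinOrder y)
    (h : padicValNat p (orderOf x) < padicValNat p (orderOf y)) :
    padicValNat p (orderOf (x * y)) = padicValNat p (orderOf y) := by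
  have := padicValNat_orderOf_mul_le (p := p) hx hy
  have := padicValNat_orderOf_right_le (p := p) hx (hx.mul hy)
  omega

lemma IsOfFinOrder.of_mul_left (hx : IsOfFinOrder x) (hxy : IsOfFinOrder (x * y)) :
    IsOfFinOrder y := by
  rw [← orderOf_pos_iff]
  exact Nat.pos_of_dvd_of_pos (Commute.all x y).orderOf_dvd_lcm_mul
    (Nat.lcm_pos hx.orderOf_pos hxy.orderOf_pos)

lemma padicValNat_orderOf_right_of_lt (hx : IsOfFinOrder x) (hxy : IsOfFinOrder (x * y))
    (h : padicValNat p (orderOf (x * y)) < padicValNat p (orderOf x)) :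
    padicValNat p (orderOf y) = padicValNat p (orderOf x) := by
  have := padicValNat_orderOf_right_le (p := p) hx hxy
  have := padicValNat_orderOf_right_le (p := p) (hx.of_mul_left hxy) (mul_comm x y ▸ hxy)
  rw [mul_comm y x] at this
  omega

end CommMonoid

lemma pow_eq_one_iff_padicValNat_orderOf_le {G : Type*} [Monoid G] {x : G} {m : ℕ}
    (hm : m ≠ 0) (hx : x ^ (2 * m) = 1) :
    x ^ m = 1 ↔ padicValNat 2 (orderOf x) ≤ padicValNat 2 m := by
  rw [← orderOf_dvd_iff_pow_eq_one]
  exact dvd_iff_padicValNat_le_of_dvd_mul hm (orderOf_dvd_of_pow_eq_one hx)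

lemma padicValNat_orderOf_of_pow_eq_neg_one {R : Type*} [Monoid R] [HasDistribNeg R]
    (hR : (-1 : R) ≠ 1) {x : R} {m : ℕ} (hm : m ≠ 0) (hx : x ^ m = -1) :
    padicValNat 2 (orderOf x) = padicValNat 2 m + 1 := by
  refine padicValNat_eq_succ_of_dvd_mul_of_not_dvd hm
    (orderOf_dvd_of_pow_eq_one (by rw [pow_mul', hx, neg_one_sq])) ?_
  rw [orderOf_dvd_iff_pow_eq_one, hx]
  exact hR

lemma pow_eq_neg_one_or_pow_eq_one_of_mul_eq {ι R : Type*} [CommRing R] [NoZeroDivisors R]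
    {z w l : ι → R} (hw : ∀ i, w i = l i * z i) (hzfin : ∀ i, IsOfFinOrder (z i))
    (hlfin : ∀ i, IsOfFinOrder (l i)) {e m : ℕ} (hm : m ≠ 0)
    (hz : ∀ i, padicValNat 2 (orderOf (z i)) = e) (he : e ≤ padicValNat 2 m + 1)
    (hl : ∀ i, padicValNat 2 (orderOf (l i)) ≤ padicValNat 2 m) (hwm : ∀ i, w i ^ (2 * m) = 1) :
    (∀ i, w i ^ m = -1) ∨ (∀ i, w i ^ m = 1) := by
  rcases he.lt_or_eq with he | rfl
  · refine Or.inr fun i => ?_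
    rw [pow_eq_one_iff_padicValNat_orderOf_le hm (hwm i), hw i]
    have := padicValNat_orderOf_mul_le (p := 2) (hlfin i) (hzfin i)
    have := hl i
    have := hz i
    omega
  · refine Or.inl fun i => ?_
    have hwv : padicValNat 2 (orderOf (w i)) = padicValNat 2 m + 1 := by
      have hlz : padicValNat 2 (orderOf (l i)) < padicValNat 2 (orderOf (z i)) := by
        rw [hz i]
        exact Nat.lt_succ_of_le (hl i)
      rw [hw i, padicValNat_orderOf_mul_of_lt (hlfin i) (hzfin i) hlz, hz i]
    have hne : w i ^ m ≠ 1 := by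
      rw [Ne, pow_eq_one_iff_padicValNat_orderOf_le hm (hwm i), hwv]
      omega
    have hsq : (w i ^ m) ^ 2 = 1 := by rw [← pow_mul, mul_comm, hwm i]
    exact (sq_eq_one_iff.1 hsq).resolve_left hne

lemma even_mul_of_padicValNat_lt_two_mul {r M m : ℕ} (hM : M ≠ 0) (hm : m ≠ 0)
    (hrM : Even (r * M)) (h : padicValNat 2 M < padicValNat 2 (2 * m)) : Even (r * m) := by
  by_cases hm2 : 2 ∣ m
  · exact (even_iff_two_dvd.2 hm2).mul_left r
  have hM2 : ¬2 ∣ M := fun hM2 => by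
    have := one_le_padicValNat_of_dvd hM hM2
    rw [padicValNat.mul two_ne_zero hm, padicValNat_self,
      padicValNat.eq_zero_of_not_dvd hm2] at h
    omega
  exact ((Nat.even_mul.1 hrM).resolve_right (mt even_iff_two_dvd.1 hM2)).mul_right m

theorem stmt2_general (r g : ℕ) (hg : 0 < g)
    (z w l : Fin g → ℂ) (hw : ∀ i, w i = l i * z i)
    (M : ℕ) (hM_pos : 0 < M) (hM_even : Even (r * M))
    (hM_par : ∀ i, z i ^ M = -1)
    (N : ℕ) (hN_pos : 0 < N)
    (hN_min : ∀ m : ℕ, 0 < m → Even (r * m) →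
      ((∀ i, w i ^ m = -1) ∨ (∀ i, w i ^ m = 1)) → N ≤ m)
    (hN_par : ∀ i, w i ^ N = 1)
    (t : ℕ) (ht : t = Finset.univ.lcm fun i => orderOf (l i))
    (eM eN : ℕ) (heM : eM = padicValNat 2 M) (heN : eN = padicValNat 2 N) :
    (eN ≤ eM → padicValNat 2 t = 1 + eM) ∧ (eM < eN → padicValNat 2 t = eN) := by
  subst ht heM heN
  have hzfin : ∀ i, IsOfFinOrder (z i) := fun i =>
    isOfFinOrder_iff_pow_eq_one.2 ⟨2 * M, by omega, by rw [pow_mul', hM_par i, neg_one_sq]⟩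
  have hzlw : ∀ i, z i * l i = w i := fun i => by rw [hw i, mul_comm]
  have hwfin : ∀ i, IsOfFinOrder (z i * l i) := fun i =>
    hzlw i ▸ isOfFinOrder_iff_pow_eq_one.2 ⟨N, hN_pos, hN_par i⟩
  have hlfin : ∀ i, IsOfFinOrder (l i) := fun i => (hzfin i).of_mul_left (hwfin i)
  have hz : ∀ i, padicValNat 2 (orderOf (z i)) = padicValNat 2 M + 1 := fun i =>
    padicValNat_orderOf_of_pow_eq_neg_one (by norm_num) hM_pos.ne' (hM_par i)
  have hwN : ∀ i, padicValNat 2 (orderOf (w i)) ≤ padicValNat 2 N := fun i =>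
    padicValNat_le_of_dvd hN_pos.ne' (orderOf_dvd_of_pow_eq_one (hN_par i))
  have : Nonempty (Fin g) := ⟨⟨0, hg⟩⟩
  rw [padicValNat_finset_lcm fun i _ => (hlfin i).orderOf_pos.ne']
  refine ⟨fun hle => ?_, fun hlt => le_antisymm ?_ ?_⟩
  · have hl : ∀ i, padicValNat 2 (orderOf (l i)) = padicValNat 2 M + 1 := fun i => by
      rw [← hz i]
      refine padicValNat_orderOf_right_of_lt (hzfin i) (hwfin i) ?_
      rw [hzlw i, hz i]
      exact (hwN i).trans_lt (by omega)
    simp only [hl]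
    rw [Finset.sup_const Finset.univ_nonempty, add_comm]
  · refine Finset.sup_le fun i _ => ?_
    have := padicValNat_orderOf_right_le (p := 2) (hzfin i) (hwfin i)
    rw [hzlw i, hz i] at this
    have := hwN i
    omega
  · by_contra! hsup
    have hl : ∀ i, padicValNat 2 (orderOf (l i)) < padicValNat 2 N := fun i =>
      (Finset.sup_lt_iff (Nat.zero_le _ |>.trans_lt hlt)).1 hsup i (Finset.mem_univ i)
    obtain ⟨m, rfl⟩ : 2 ∣ N := dvd_of_one_le_padicValNat (by omega)
    have hm : m ≠ 0 := by omega
    have hvN : padicValNat 2 (2 * m) = padicValNat 2 m + 1 := by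
      rw [padicValNat.mul two_ne_zero hm, padicValNat_self, add_comm]
    have hsign := pow_eq_neg_one_or_pow_eq_one_of_mul_eq hw hzfin hlfin hm hz (by omega)
      (fun i => by have := hl i; omega) hN_par
    have := hN_min m (by omega) (even_mul_of_padicValNat_lt_two_mul hM_pos.ne' hm hM_even hlt) hsign
    omega

/-- Proposition 4.10: if `A/K` has period `M` and parity `+1` and its twist has
period `N` and parity `-1`, then `ord₂ t = 1 + ord₂ M` if `ord₂ N ≤ ord₂ M`, and
`ord₂ t = ord₂ N` if `ord₂ N > ord₂ M`, where `t = lcmᵢ (orderOf λᵢ)`. -/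
theorem stmt2 (r g : ℕ) (hr : 0 < r) (hg : 0 < g)
    (z w l : Fin g → ℂ) (hw : ∀ i, w i = l i * z i)
    (M : ℕ) (hM_pos : 0 < M) (hM_even : Even (r * M))
    (hM_prop : (∀ i, z i ^ M = -1) ∨ (∀ i, z i ^ M = 1))
    (hM_min : ∀ m : ℕ, 0 < m → Even (r * m) →
      ((∀ i, z i ^ m = -1) ∨ (∀ i, z i ^ m = 1)) → M ≤ m)
    (hM_par : ∀ i, z i ^ M = -1)
    (N : ℕ) (hN_pos : 0 < N) (hN_even : Even (r * N))
    (hN_prop : (∀ i, w i ^ N = -1) ∨ (∀ i, w i ^ N = 1))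
    (hN_min : ∀ m : ℕ, 0 < m → Even (r * m) →
      ((∀ i, w i ^ m = -1) ∨ (∀ i, w i ^ m = 1)) → N ≤ m)
    (hN_par : ∀ i, w i ^ N = 1)
    (t : ℕ) (ht : t = Finset.univ.lcm fun i => orderOf (l i))
    (eM eN : ℕ) (heM : eM = padicValNat 2 M) (heN : eN = padicValNat 2 N) :
    (eN ≤ eM → padicValNat 2 t = 1 + eM) ∧ (eM < eN → padicValNat 2 t = eN) :=
  stmt2_general r g hg z w l hw M hM_pos hM_even hM_par N hN_pos hN_min hN_par t ht eM eN heM heN
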